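/- arXiv:1712.00487 — 2 statements merged into one kernel-verified Lean document; each statement's English description precedes it below -/
import Mathlib

section
/- Let X be a real Hilbert space, let m ≥ 2, and for each i ∈ {1,…,m} let T_i : X → X be firmly nonexpansive and asymptotically regular, i.e., 0 ∈ closure (Set.range (fun x => x − T_i x)). Then the composition T_m T_{m−1} ⋯ T_1 is asymptotically regular, i.e., 0 ∈ closure (Set.range (fun x => x − (T_m T_{m−1} ⋯ T_1) x)). -/
/-- Composition `T (m-1) ∘ ⋯ ∘ T 1 ∘ T 0` applied to `x` (apply `T 0` first),
so that with `T i` playing the role of `T_{i+1}` this is `T_m T_{m-1} ⋯ T_1 x`. -/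
def compSeq {X : Type*} (m : ℕ) (T : Fin m → X → X) : X → X :=
  fun x => (List.ofFn T).foldl (fun y f => f y) x

/-!
Work in the product space `X^m`, with `T̄ = T_1 × ⋯ × T_m` acting componentwise and the cyclic
shift `R`, a linear isometry. `T̄` is firmly nonexpansive and asymptotically regular. Comparing
`R y` with an almost fixed point `a` of `T̄` through firm nonexpansiveness gives the
Brezis–Haraux type bound `⟪T̄ (R y) - y + (a - T̄ a), y - a⟫ ≤ 5 ‖a‖²` for every `y`. For the
solution of `T̄ (R y) = (1 + t) y` (Banach's fixed point theorem) the displacement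
`‖y - T̄ (R y)‖ = t ‖y‖` is then small once `t` and `‖a - T̄ a‖` are, so `T̄ ∘ R`, and hence
`R ∘ T̄`, is asymptotically regular. An almost fixed point of `R ∘ T̄` is a tuple with
`y_{i+1} ≈ T_i y_i` cyclically, and since the `T_i` are nonexpansive, its first entry is an almost
fixed point of the composition, with `m` times the error.
-/

open Set Filter Topology RealInnerProductSpace

section AsymptoticallyRegular

def AsymptoticallyRegular {E : Type*} [AddGroup E] [TopologicalSpace E] (S : E → E) : Prop :=
  (0 : E) ∈ closure (range fun x => x - S x)

variable {E : Type*} [SeminormedAddCommGroup E]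

theorem asymptoticallyRegular_iff {S : E → E} :
    AsymptoticallyRegular S ↔ ∀ ε > 0, ∃ x, ‖x - S x‖ < ε := by
  simp [AsymptoticallyRegular, Metric.mem_closure_iff, dist_zero_left]

theorem AsymptoticallyRegular.isometryEquiv_comp {F : Type*} [SeminormedAddCommGroup F]
    {S : E → F} {R : F ≃ᵢ E} (h : AsymptoticallyRegular (S ∘ R)) :
    AsymptoticallyRegular (R ∘ S) := by
  rw [asymptoticallyRegular_iff] at h ⊢
  intro ε hε
  obtain ⟨x, hx⟩ := h ε hε
  refine ⟨R x, ?_⟩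
  rwa [← dist_eq_norm, Function.comp_apply, R.dist_eq, dist_eq_norm]

end AsymptoticallyRegular

section FirmlyNonexpansive

variable {H : Type*} [NormedAddCommGroup H] [InnerProductSpace ℝ H]

def FirmlyNonexpansive (T : H → H) : Prop :=
  ∀ x y, ‖T x - T y‖ ^ 2 ≤ ⟪x - y, T x - T y⟫

theorem LinearIsometry.inner_sub_map_self (R : H →ₗᵢ[ℝ] H) (u : H) :
    ⟪u - R u, u⟫ = ‖u - R u‖ ^ 2 / 2 := by
  rw [norm_sub_sq_real, R.norm_map, inner_sub_left, real_inner_self_eq_norm_sq, real_inner_comm]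
  ring

theorem LinearIsometryEquiv.abs_inner_sub_map_le (R : H ≃ₗᵢ[ℝ] H) (a u : H) :
    |⟪a - R a, u⟫| ≤ ‖a‖ * ‖u - R u‖ := by
  have h : ⟪a - R a, u⟫ = ⟪a, u - R.symm u⟫ := by
    rw [inner_sub_left, inner_sub_right, R.inner_map_eq_flip]
  rw [h]
  calc |⟪a, u - R.symm u⟫| ≤ ‖a‖ * ‖u - R.symm u‖ := abs_real_inner_le_norm _ _
    _ = ‖a‖ * ‖u - R u‖ := by
      rw [← R.norm_map (u - R.symm u), map_sub, R.apply_symm_apply, norm_sub_rev]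

namespace FirmlyNonexpansive

variable {T : H → H}

theorem inner_sub_nonneg (hT : FirmlyNonexpansive T) (x y : H) :
    0 ≤ ⟪(x - T x) - (y - T y), T x - T y⟫ := by
  have h := hT x y
  rw [← real_inner_self_eq_norm_sq] at h
  rw [show (x - T x) - (y - T y) = (x - y) - (T x - T y) by abel, inner_sub_left]
  linarith

theorem lipschitzWith_one (hT : FirmlyNonexpansive T) : LipschitzWith 1 T := by
  refine LipschitzWith.of_dist_le_mul fun x y => ?_
  rw [NNReal.coe_one, one_mul, dist_eq_norm, dist_eq_norm]
  have h := (hT x y).trans (real_inner_le_norm _ _)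
  rw [sq] at h
  rcases (norm_nonneg (T x - T y)).eq_or_lt with h0 | h0
  · rw [← h0]; exact norm_nonneg _
  · exact le_of_mul_le_mul_right h h0

theorem inner_comp_sub_self_le (hT : FirmlyNonexpansive T) (R : H ≃ₗᵢ[ℝ] H) (y a : H) :
    ⟪T (R y) - y + (a - T a), y - a⟫ ≤ 5 * ‖a‖ ^ 2 := by
  set z := T (R y) - y + (a - T a)
  set w := y - a
  set p := w - R w
  have hfirm : ⟪p + (a - R a) + z, z + w⟫ ≤ 0 := by
    have h := hT.inner_sub_nonneg (R y) a
    have h1 : R y - T (R y) - (a - T a) = -(p + (a - R a) + z) := by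
      simp only [p, w, z, map_sub]; abel
    have h2 : T (R y) - T a = z + w := by simp only [z, w]; abel
    rw [h1, h2, inner_neg_left] at h
    linarith
  have hpw : ⟪p, w⟫ = ‖p‖ ^ 2 / 2 := R.toLinearIsometry.inner_sub_map_self w
  have haw : |⟪a - R a, w⟫| ≤ ‖a‖ * ‖p‖ := R.abs_inner_sub_map_le a w
  have haz : |⟪a - R a, z⟫| ≤ 2 * ‖a‖ * ‖z‖ := by
    refine (abs_real_inner_le_norm _ _).trans (mul_le_mul_of_nonneg_right ?_ (norm_nonneg _))
    calc ‖a - R a‖ ≤ ‖a‖ + ‖R a‖ := norm_sub_le _ _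
      _ = 2 * ‖a‖ := by rw [R.norm_map]; ring
  have hpz := abs_real_inner_le_norm p z
  simp only [inner_add_left, inner_add_right, real_inner_self_eq_norm_sq] at hfirm
  -- the slack is `(‖p‖ - ‖z‖ - ‖a‖)² / 2 + (‖z‖ - 3 ‖a‖)² / 2`
  nlinarith [abs_le.mp haw, abs_le.mp haz, abs_le.mp hpz, sq_nonneg (‖p‖ - ‖z‖ - ‖a‖),
    sq_nonneg (‖z‖ - 3 * ‖a‖)]

end FirmlyNonexpansive

end FirmlyNonexpansive

theorem exists_apply_eq_smul_of_lipschitzWith_one {E : Type*} [NormedAddCommGroup E]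
    [NormedSpace ℝ E] [CompleteSpace E] {N : E → E} (hN : LipschitzWith 1 N) {c : ℝ}
    (hc : 1 < c) : ∃ y, N y = c • y := by
  have hc0 : 0 < c := one_pos.trans hc
  have hlip : LipschitzWith ‖c⁻¹‖₊ (fun y => c⁻¹ • N y) := by
    have h := (lipschitzWith_smul (β := E) c⁻¹).comp hN
    rwa [mul_one] at h
  have hlt : ‖c⁻¹‖₊ < 1 := by
    rw [← NNReal.coe_lt_coe, coe_nnnorm, norm_inv, Real.norm_of_nonneg hc0.le, NNReal.coe_one]
    exact inv_lt_one_of_one_lt₀ hc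
  obtain ⟨y, hy, -⟩ := ContractingWith.exists_fixedPoint ⟨hlt, hlip⟩ 0 (edist_ne_top _ _)
  exact ⟨y, ((eq_inv_smul_iff₀ hc0.ne').mp hy.eq.symm).symm⟩

theorem FirmlyNonexpansive.asymptoticallyRegular_comp_linearIsometryEquiv {H : Type*}
    [NormedAddCommGroup H] [InnerProductSpace ℝ H] [CompleteSpace H] {T : H → H}
    (hT : FirmlyNonexpansive T) (hreg : AsymptoticallyRegular T) (R : H ≃ₗᵢ[ℝ] H) :
    AsymptoticallyRegular (T ∘ R) := by
  rw [asymptoticallyRegular_iff] at hreg ⊢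
  intro ε hε
  obtain ⟨a, ha⟩ := hreg (ε / 4) (by positivity)
  set d := ‖a - T a‖
  set A := ‖a‖
  obtain ⟨t, ⟨htA, htK⟩, ht⟩ :
      ∃ t, (t * A < ε / 4 ∧ t * (5 * A ^ 2 + d * A) < ε ^ 2 / 2) ∧ 0 < t := by
    have hA := (tendsto_id.mul_const A).eventually_lt_const
      (show 0 * A < ε / 4 by rw [zero_mul]; positivity)
    have hK := (tendsto_id.mul_const (5 * A ^ 2 + d * A)).eventually_lt_const
      (show 0 * (5 * A ^ 2 + d * A) < ε ^ 2 / 2 by rw [zero_mul]; positivity)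
    have hpos : ∀ᶠ t in 𝓝[>] (0 : ℝ), 0 < t := self_mem_nhdsWithin
    exact (((hA.and hK).filter_mono nhdsWithin_le_nhds).and hpos).exists
  have hN : LipschitzWith 1 (T ∘ R) := by
    simpa only [mul_one] using hT.lipschitzWith_one.comp R.lipschitz
  obtain ⟨y, hy⟩ := exists_apply_eq_smul_of_lipschitzWith_one hN (c := 1 + t) (by linarith)
  have hTy : T (R y) - y = t • y := by
    rw [← Function.comp_apply (f := T), hy, add_smul, one_smul, add_sub_cancel_left]
  refine ⟨y, ?_⟩
  have hkey := hT.inner_comp_sub_self_le R y a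
  rw [hTy, inner_add_left, inner_sub_right, inner_sub_right, real_inner_smul_left,
    real_inner_smul_left, real_inner_self_eq_norm_sq] at hkey
  have hya := real_inner_le_norm y a
  have hey := abs_real_inner_le_norm (a - T a) y
  have hea := abs_real_inner_le_norm (a - T a) a
  have hbound : t * ‖y‖ ^ 2 ≤ 5 * A ^ 2 + t * A * ‖y‖ + d * ‖y‖ + d * A := by
    nlinarith [abs_le.mp hey, abs_le.mp hea]
  have hdisp : ‖y - (T ∘ R) y‖ = t * ‖y‖ := by
    rw [Function.comp_apply, ← neg_sub, hTy, norm_neg, norm_smul, Real.norm_of_nonneg ht.le]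
  rw [hdisp]
  have hquad : (t * ‖y‖) ^ 2 ≤ (d + t * A) * (t * ‖y‖) + t * (5 * A ^ 2 + d * A) := by
    linear_combination t * hbound
  by_contra! hε'
  nlinarith

section PiLp

variable {ι : Type*} {X : ι → Type*}

theorem FirmlyNonexpansive.piLp_map [Fintype ι] [∀ i, NormedAddCommGroup (X i)]
    [∀ i, InnerProductSpace ℝ (X i)] {T : ∀ i, X i → X i} (hT : ∀ i, FirmlyNonexpansive (T i)) :
    FirmlyNonexpansive (WithLp.map 2 (Pi.map T) : PiLp 2 X → PiLp 2 X) := by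
  intro u v
  rw [PiLp.norm_sq_eq_of_L2, PiLp.inner_apply]
  exact Finset.sum_le_sum fun i _ => hT i (u i) (v i)

theorem AsymptoticallyRegular.piLp_map [∀ i, SeminormedAddCommGroup (X i)] {T : ∀ i, X i → X i}
    (hT : ∀ i, AsymptoticallyRegular (T i)) :
    AsymptoticallyRegular (WithLp.map 2 (Pi.map T) : PiLp 2 X → PiLp 2 X) := by
  have h0 : (0 : ∀ i, X i) ∈ closure (univ.pi fun i => range fun x => x - T i x) := by
    rw [closure_pi_set]
    exact fun i _ => hT i
  rw [AsymptoticallyRegular, ← WithLp.toLp_zero]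
  refine map_mem_closure (PiLp.continuous_toLp 2 X) h0 fun z hz => ?_
  choose x hx using fun i => hz i (mem_univ i)
  exact ⟨WithLp.toLp 2 x, by ext i; simp [hx]⟩

end PiLp

theorem dist_foldl_apply_le {α : Type*} [PseudoMetricSpace α] {δ : ℝ} (fs : List (α → α))
    (hfs : ∀ f ∈ fs, LipschitzWith 1 f) (u : ℕ → α)
    (hu : ∀ k (hk : k < fs.length), dist (fs[k] (u k)) (u (k + 1)) ≤ δ) (x : α) :
    dist (fs.foldl (fun y f => f y) x) (u fs.length) ≤ dist x (u 0) + fs.length * δ := by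
  induction fs generalizing u x with
  | nil => simp
  | cons f fs ih =>
    have hf : dist (f x) (u 1) ≤ dist x (u 0) + δ :=
      calc dist (f x) (u 1) ≤ dist (f x) (f (u 0)) + dist (f (u 0)) (u 1) := dist_triangle _ _ _
        _ ≤ dist x (u 0) + δ := by
          gcongr
          · simpa using (hfs f List.mem_cons_self).dist_le_mul x (u 0)
          · exact hu 0 (by simp)
    have htail := ih (fun g hg => hfs g (List.mem_cons_of_mem f hg)) (fun k => u (k + 1))
      (fun k hk => hu (k + 1) (by simpa using hk)) (f x)
    simp only [List.foldl_cons, List.length_cons, Nat.cast_add, Nat.cast_one] at htail ⊢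
    linarith

open Fin.NatCast in
theorem asymptoticallyRegular_compSeq {X : Type*} [NormedAddCommGroup X] [InnerProductSpace ℝ X]
    [CompleteSpace X] {m : ℕ} [NeZero m] {T : Fin m → X → X}
    (hT : ∀ i, FirmlyNonexpansive (T i)) (hreg : ∀ i, AsymptoticallyRegular (T i)) :
    AsymptoticallyRegular (compSeq m T) := by
  let T' : PiLp 2 (fun _ : Fin m => X) → PiLp 2 (fun _ : Fin m => X) := WithLp.map 2 (Pi.map T)
  let R := LinearIsometryEquiv.piLpCongrLeft 2 ℝ X (Equiv.addRight (1 : Fin m))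
  have hR : ∀ v i, R v (i + 1) = v i := fun v i => by
    simp [R, LinearIsometryEquiv.piLpCongrLeft_apply]
  have hRT : AsymptoticallyRegular (R ∘ T') :=
    ((FirmlyNonexpansive.piLp_map hT).asymptoticallyRegular_comp_linearIsometryEquiv
      (AsymptoticallyRegular.piLp_map hreg) R).isometryEquiv_comp (R := R.toIsometryEquiv)
  rw [asymptoticallyRegular_iff] at hRT ⊢
  intro ε hε
  have hm : (0 : ℝ) < m := by exact_mod_cast Nat.pos_of_neZero m
  obtain ⟨y, hy⟩ := hRT (ε / m) (by positivity)
  have hstep : ∀ i : Fin m, dist (T i (y i)) (y (i + 1)) ≤ ‖y - (R ∘ T') y‖ := fun i => by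
    rw [dist_comm, dist_eq_norm]
    convert PiLp.norm_apply_le (y - (R ∘ T') y) (i + 1) using 2
    simp [hR, T']
  have hchain := dist_foldl_apply_le (List.ofFn T)
    (by simpa using fun i => (hT i).lipschitzWith_one) (fun k => y k) (δ := ‖y - (R ∘ T') y‖)
    (fun k hk => by
      rw [List.length_ofFn] at hk
      simpa [Fin.natCast_eq_mk hk] using hstep ⟨k, hk⟩) (y 0)
  simp only [List.length_ofFn, Nat.cast_zero, Fin.natCast_self, dist_self, zero_add] at hchain
  refine ⟨y 0, ?_⟩
  rw [← dist_eq_norm, dist_comm]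
  calc dist (compSeq m T (y 0)) (y 0) ≤ m * ‖y - (R ∘ T') y‖ := hchain
    _ < m * (ε / m) := by gcongr
    _ = ε := mul_div_cancel₀ ε hm.ne'

theorem stmt_3_general {X : Type*} [NormedAddCommGroup X] [InnerProductSpace ℝ X] [CompleteSpace X]
    (m : ℕ) (T : Fin m → X → X)
    (hT : ∀ i, ∀ x y : X, ‖T i x - T i y‖ ^ 2 ≤ (inner ℝ (x - y) (T i x - T i y) : ℝ))
    (hreg : ∀ i, (0 : X) ∈ closure (Set.range (fun x => x - T i x))) :
    (0 : X) ∈ closure (Set.range (fun x => x - compSeq m T x)) := by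
  rcases eq_zero_or_neZero m with rfl | _
  · exact subset_closure ⟨0, by simp [compSeq]⟩
  · exact asymptoticallyRegular_compSeq hT hreg

theorem stmt_3 {X : Type*} [NormedAddCommGroup X] [InnerProductSpace ℝ X] [CompleteSpace X]
    (m : ℕ) (hm : 2 ≤ m) (T : Fin m → X → X)
    (hT : ∀ i, ∀ x y : X, ‖T i x - T i y‖ ^ 2 ≤ (inner ℝ (x - y) (T i x - T i y) : ℝ))
    (hreg : ∀ i, (0 : X) ∈ closure (Set.range (fun x => x - T i x))) :
    (0 : X) ∈ closure (Set.range (fun x => x - compSeq m T x)) :=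
  stmt_3_general m T hT hreg
end

section
/- Let X be a real Hilbert space, let m ≥ 2, and for each i ∈ {1,…,m} let T_i : X → X be firmly nonexpansive. Let u be the minimal displacement vector of the composition T_m T_{m−1} ⋯ T_1 and let w be the minimal displacement vector of the cyclically shifted composition T_{m−1} ⋯ T_1 T_m. Then u belongs to the (unclosed) range of Id − T_m T_{m−1} ⋯ T_1 if and only if w belongs to the (unclosed) range of Id − T_{m−1} ⋯ T_1 T_m. -/
/-!
Write `B = T_m` and `A = T_{m-1} ⋯ T_1`, so the two compositions are `B ∘ A` and `A ∘ B`; by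
symmetry it suffices to show that `u = x - B (A x)` forces `w ∈ range (Id - A ∘ B)`. Since
`B y - (B ∘ A) (B y) = B y - B (A (B y))`, the map `B` sends displacements of `A ∘ B` to
displacements of `B ∘ A` of no larger norm, so `‖u‖ ≤ ‖w‖`. Now `A x - A (B (A x))` is a
displacement of `A ∘ B` of norm at most `‖u‖ ≤ ‖w‖`, hence of norm exactly `‖u‖`: `A` is isometric
on the pair `x`, `B (A x)`. Compositions of firmly nonexpansive maps translate such pairs, so `u`
itself is a displacement of `A ∘ B` of minimal norm. Finally the closure of the range of `Id - N`
is convex for nonexpansive `N` (points of a segment are approximated by the displacements at the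
resolvent points `z` with `ε z + (z - N z) = t`), so its element of minimal norm is unique and
`u = w`.
-/

open Set Filter Topology

section

variable {X : Type*}

/-- Nonexpansive, and isometric on a pair of points only by translating it. Firmly nonexpansive
maps have this property, and unlike firm nonexpansiveness it is stable under composition. -/
structure IsRigidlyNonexpansive [NormedAddCommGroup X] (f : X → X) : Prop where
  lipschitzWith : LipschitzWith 1 f
  sub_eq_of_norm_eq : ∀ x y, ‖f x - f y‖ = ‖x - y‖ → f x - f y = x - y

theorem compSeq_zero (T : Fin 0 → X → X) : compSeq 0 T = id := rfl

theorem compSeq_succ (k : ℕ) (T : Fin (k + 1) → X → X) :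
    compSeq (k + 1) T = T (Fin.last k) ∘ compSeq k (fun i => T i.castSucc) := by
  funext x
  simp only [compSeq, List.ofFn_succ', List.concat_eq_append, List.foldl_append,
    List.foldl_cons, List.foldl_nil, Function.comp_apply]

theorem compSeq_sub_one (k : ℕ) (T : Fin (k + 1) → X → X) (h : 1 < k + 1) :
    compSeq (k + 1) (fun j => T (j - ⟨1, h⟩)) =
      compSeq k (fun i => T i.castSucc) ∘ T (Fin.last k) := by
  have h0 : (0 : Fin (k + 1)) - ⟨1, h⟩ = Fin.last k := by
    rw [Fin.ext_iff, Fin.val_sub, Fin.val_zero, Fin.val_last, Fin.val_mk, Nat.mod_eq_of_lt]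
      <;> omega
  have hsucc : ∀ i : Fin k, i.succ - ⟨1, h⟩ = i.castSucc := by
    intro i
    rw [Fin.ext_iff, Fin.val_sub, Fin.val_succ, Fin.val_castSucc,
      show k + 1 - 1 + (i + 1) = i + (k + 1) by omega, Nat.add_mod_right, Nat.mod_eq_of_lt]
    omega
  funext x
  simp only [compSeq, List.ofFn_succ, List.foldl_cons, h0, hsucc, Function.comp_apply]

section NormedAddCommGroup

variable [NormedAddCommGroup X]

theorem LipschitzWith.norm_sub_le_of_one {f : X → X} (hf : LipschitzWith 1 f) (x y : X) :
    ‖f x - f y‖ ≤ ‖x - y‖ := by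
  simpa using hf.norm_sub_le x y

namespace IsRigidlyNonexpansive

theorem id : IsRigidlyNonexpansive (id : X → X) := ⟨LipschitzWith.id, fun _ _ _ => rfl⟩

theorem comp {f g : X → X} (hf : IsRigidlyNonexpansive f) (hg : IsRigidlyNonexpansive g) :
    IsRigidlyNonexpansive (f ∘ g) where
  lipschitzWith := by simpa using hf.lipschitzWith.comp hg.lipschitzWith
  sub_eq_of_norm_eq x y h := by
    have hf_le := hf.lipschitzWith.norm_sub_le_of_one (g x) (g y)
    have hg_le := hg.lipschitzWith.norm_sub_le_of_one x y
    have hg_eq : ‖g x - g y‖ = ‖x - y‖ := le_antisymm hg_le (h ▸ hf_le)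
    have hf_eq : ‖f (g x) - f (g y)‖ = ‖g x - g y‖ := hg_eq ▸ h
    rw [Function.comp_apply, Function.comp_apply, hf.sub_eq_of_norm_eq _ _ hf_eq,
      hg.sub_eq_of_norm_eq _ _ hg_eq]

end IsRigidlyNonexpansive

theorem isRigidlyNonexpansive_compSeq {m : ℕ} {T : Fin m → X → X}
    (hT : ∀ i, IsRigidlyNonexpansive (T i)) : IsRigidlyNonexpansive (compSeq m T) := by
  induction m with
  | zero => exact compSeq_zero T ▸ IsRigidlyNonexpansive.id
  | succ k ih => exact compSeq_succ k T ▸ (hT _).comp (ih fun i => hT _)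

theorem norm_le_of_mem_closure_range_sub_comp {A B : X → X} (hA : LipschitzWith 1 A) {u w : X}
    (hu : u ∈ closure (range fun x => x - B (A x)))
    (hwmin : ∀ z ∈ closure (range fun x => x - A (B x)), ‖w‖ ≤ ‖z‖) : ‖w‖ ≤ ‖u‖ := by
  refine closure_minimal ?_ (isClosed_le continuous_const continuous_norm) hu
  rintro _ ⟨x, rfl⟩
  calc ‖w‖ ≤ ‖A x - A (B (A x))‖ := hwmin _ (subset_closure ⟨A x, rfl⟩)
    _ ≤ ‖x - B (A x)‖ := hA.norm_sub_le_of_one _ _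

end NormedAddCommGroup

theorem Convex.eq_of_norm_le_of_forall_norm_le [NormedAddCommGroup X] [NormedSpace ℝ X]
    [StrictConvexSpace ℝ X] {K : Set X} (hK : Convex ℝ K) {a b : X} (ha : a ∈ K) (hb : b ∈ K)
    (hmin : ∀ z ∈ K, ‖a‖ ≤ ‖z‖) (hba : ‖b‖ ≤ ‖a‖) : b = a := by
  by_contra hne
  have hmid := hK ha hb (half_pos one_pos).le (half_pos one_pos).le (add_halves 1)
  have hlt := norm_combo_lt_of_ne le_rfl hba (Ne.symm hne) (half_pos one_pos) (half_pos one_pos)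
    (add_halves 1)
  exact (hmin _ hmid).not_gt hlt

section InnerProductSpace

variable [NormedAddCommGroup X] [InnerProductSpace ℝ X]

theorem IsRigidlyNonexpansive.of_firmlyNonexpansive {f : X → X}
    (hf : ∀ x y, ‖f x - f y‖ ^ 2 ≤ inner ℝ (x - y) (f x - f y)) : IsRigidlyNonexpansive f := by
  have key : ∀ x y, ‖f x - f y‖ ^ 2 + ‖(x - y) - (f x - f y)‖ ^ 2 ≤ ‖x - y‖ ^ 2 := by
    intro x y
    rw [norm_sub_sq_real (x - y) (f x - f y)]
    linarith [hf x y]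
  have hle : ∀ x y, ‖f x - f y‖ ≤ ‖x - y‖ := fun x y =>
    (sq_le_sq₀ (norm_nonneg _) (norm_nonneg _)).1 (by nlinarith [key x y])
  refine ⟨LipschitzWith.of_dist_le_mul fun x y => by simpa [dist_eq_norm] using hle x y,
    fun x y h => ?_⟩
  have hzero : ‖(x - y) - (f x - f y)‖ ^ 2 = 0 := by
    have := key x y
    rw [h] at this
    exact le_antisymm (by linarith) (sq_nonneg _)
  rw [sq_eq_zero_iff, norm_eq_zero, sub_eq_zero] at hzero
  exact hzero.symm

theorem LipschitzWith.inner_sub_apply_sub_nonneg {N : X → X} (hN : LipschitzWith 1 N)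
    (x y : X) : 0 ≤ inner ℝ ((x - N x) - (y - N y)) (x - y) := by
  have hcs := real_inner_le_norm (N x - N y) (x - y)
  have hle := hN.norm_sub_le_of_one x y
  rw [show (x - N x) - (y - N y) = (x - y) - (N x - N y) by abel, inner_sub_left,
    real_inner_self_eq_norm_sq]
  nlinarith [norm_nonneg (x - y)]

theorem LipschitzWith.exists_smul_add_sub_apply_eq [CompleteSpace X] {N : X → X}
    (hN : LipschitzWith 1 N) {ε : ℝ} (hε : 0 < ε) (t : X) : ∃ z, ε • z + (z - N z) = t := by
  have hε' : (1 + ε)⁻¹ < 1 := inv_lt_one_of_one_lt₀ (by linarith)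
  have hcontr : ContractingWith ⟨(1 + ε)⁻¹, by positivity⟩ fun z => (1 + ε)⁻¹ • (t + N z) := by
    refine ⟨hε', LipschitzWith.of_dist_le_mul fun a b => ?_⟩
    rw [dist_eq_norm, dist_eq_norm, ← smul_sub, add_sub_add_left_eq_sub, norm_smul,
      Real.norm_of_nonneg (by positivity)]
    exact mul_le_mul_of_nonneg_left (hN.norm_sub_le_of_one a b) (by positivity)
  have : Nonempty X := ⟨0⟩
  set z := ContractingWith.fixedPoint _ hcontr
  have hz : (1 + ε)⁻¹ • (t + N z) = z := ContractingWith.fixedPoint_isFixedPt hcontr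
  refine ⟨z, ?_⟩
  have hz' : t + N z = (1 + ε) • z := (inv_smul_eq_iff₀ (by positivity)).mp hz
  calc ε • z + (z - N z) = (1 + ε) • z - N z := by module
    _ = t := by rw [← hz']; abel

theorem LipschitzWith.norm_smul_le_of_smul_add_sub_apply_eq {N : X → X} (hN : LipschitzWith 1 N)
    {α β ε : ℝ} (hα : 0 ≤ α) (hβ : 0 ≤ β) (hαβ : α + β = 1) (hε : 0 < ε) {x y z : X}
    (hz : ε • z + (z - N z) = α • (x - N x) + β • (y - N y)) :
    ‖ε • z‖ ≤ ε * ‖α • x + β • y‖ +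
      √(ε * (α * β * inner ℝ ((y - N y) - (x - N x)) (y - x))) := by
  set c := α * β * inner ℝ ((y - N y) - (x - N x)) (y - x)
  set p := ‖α • x + β • y‖
  have hc : 0 ≤ c := by
    have := hN.inner_sub_apply_sub_nonneg y x
    positivity
  have hx := hN.inner_sub_apply_sub_nonneg z x
  have hy := hN.inner_sub_apply_sub_nonneg z y
  rw [show z - N z = α • (x - N x) + β • (y - N y) - ε • z by rw [← hz]; abel] at hx hy
  -- monotonicity of `Id - N` at `z` against `x` and `y`, weighted by `α` and `β`
  have key : ε * ‖z‖ ^ 2 ≤ c + ε * inner ℝ z (α • x + β • y) := by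
    rw [← real_inner_self_eq_norm_sq]
    simp only [c, inner_sub_left, inner_sub_right, inner_add_left, inner_add_right,
      real_inner_smul_left, real_inner_smul_right] at hx hy ⊢
    obtain rfl : β = 1 - α := by linarith
    nlinarith [mul_nonneg hα hx, mul_nonneg hβ hy]
  have hzp : inner ℝ z (α • x + β • y) ≤ ‖z‖ * p := real_inner_le_norm _ _
  rw [norm_smul, Real.norm_of_nonneg hε.le]
  set s := ε * ‖z‖
  set r := √(ε * c)
  have hsq : s ^ 2 ≤ r ^ 2 + ε * p * s := by
    rw [Real.sq_sqrt (by positivity)]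
    nlinarith [mul_le_mul_of_nonneg_left hzp hε.le]
  by_contra! hlt
  have hr : 0 ≤ r := Real.sqrt_nonneg _
  have hp : 0 ≤ ε * p := by positivity
  nlinarith [mul_pos (by linarith : 0 < s - ε * p - r) (by linarith : 0 < s),
    mul_nonneg hr (by linarith : 0 ≤ s - r)]

theorem LipschitzWith.combo_mem_closure_range_sub [CompleteSpace X] {N : X → X}
    (hN : LipschitzWith 1 N) {α β : ℝ} (hα : 0 ≤ α) (hβ : 0 ≤ β) (hαβ : α + β = 1) (x y : X) :
    α • (x - N x) + β • (y - N y) ∈ closure (range fun x => x - N x) := by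
  set c := α * β * inner ℝ ((y - N y) - (x - N x)) (y - x)
  set p := ‖α • x + β • y‖
  have hlim : Tendsto (fun ε : ℝ => ε * p + √(ε * c)) (𝓝[>] 0) (𝓝 0) := by
    have : Continuous fun ε : ℝ => ε * p + √(ε * c) := by fun_prop
    simpa using (this.tendsto 0).mono_left nhdsWithin_le_nhds
  rw [Metric.mem_closure_iff]
  intro δ hδ
  obtain ⟨ε, hεδ, hε⟩ := ((hlim.eventually (gt_mem_nhds hδ)).and self_mem_nhdsWithin).exists
  obtain ⟨z, hz⟩ := hN.exists_smul_add_sub_apply_eq hε (α • (x - N x) + β • (y - N y))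
  refine ⟨z - N z, ⟨z, rfl⟩, ?_⟩
  calc dist (α • (x - N x) + β • (y - N y)) (z - N z) = ‖ε • z‖ := by
        rw [dist_eq_norm, ← hz, add_sub_cancel_right]
    _ ≤ ε * p + √(ε * c) := hN.norm_smul_le_of_smul_add_sub_apply_eq hα hβ hαβ hε hz
    _ < δ := hεδ

theorem LipschitzWith.convex_closure_range_sub [CompleteSpace X] {N : X → X}
    (hN : LipschitzWith 1 N) : Convex ℝ (closure (range fun x => x - N x)) := by
  intro a ha b hb α β hα hβ hαβ
  rw [← closure_closure (s := range _)]
  refine map_mem_closure₂ (f := fun a b => α • a + β • b) (by fun_prop) ha hb ?_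
  rintro _ ⟨x, rfl⟩ _ ⟨y, rfl⟩
  exact hN.combo_mem_closure_range_sub hα hβ hαβ x y

theorem mem_range_sub_comp_of_mem_range_sub_comp [CompleteSpace X] {A B : X → X}
    (hA : IsRigidlyNonexpansive A) (hB : LipschitzWith 1 B) {u w : X}
    (humin : ∀ z ∈ closure (range fun x => x - B (A x)), ‖u‖ ≤ ‖z‖)
    (hw : w ∈ closure (range fun x => x - A (B x)))
    (hwmin : ∀ z ∈ closure (range fun x => x - A (B x)), ‖w‖ ≤ ‖z‖)
    (hu_range : u ∈ range fun x => x - B (A x)) : w ∈ range fun x => x - A (B x) := by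
  have huw : ‖u‖ ≤ ‖w‖ := norm_le_of_mem_closure_range_sub_comp hB hw humin
  obtain ⟨x, rfl⟩ := hu_range
  have hmem : A x - A (B (A x)) ∈ range fun x => x - A (B x) := ⟨A x, rfl⟩
  have hnorm : ‖A x - A (B (A x))‖ = ‖x - B (A x)‖ :=
    le_antisymm (hA.lipschitzWith.norm_sub_le_of_one _ _)
      (huw.trans (hwmin _ (subset_closure hmem)))
  rw [hA.sub_eq_of_norm_eq _ _ hnorm] at hmem
  have hAB : LipschitzWith 1 (A ∘ B) := by simpa using hA.lipschitzWith.comp hB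
  rwa [← hAB.convex_closure_range_sub.eq_of_norm_le_of_forall_norm_le hw
    (subset_closure hmem) hwmin huw]

end InnerProductSpace

end

theorem stmt_7 {X : Type*} [NormedAddCommGroup X] [InnerProductSpace ℝ X] [CompleteSpace X]
    (m : ℕ) (hm : 2 ≤ m) (T : Fin m → X → X)
    (hT : ∀ i, ∀ x y : X, ‖T i x - T i y‖ ^ 2 ≤ (inner ℝ (x - y) (T i x - T i y) : ℝ))
    (u w : X)
    (hu : u ∈ closure (Set.range (fun x => x - compSeq m T x)))
    (humin : ∀ z ∈ closure (Set.range (fun x => x - compSeq m T x)), ‖u‖ ≤ ‖z‖)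
    -- `w` is the minimal displacement vector of `T_{m-1} ⋯ T_1 T_m`,
    -- the cyclic shift which applies `T_m` first:
    (hw : w ∈ closure (Set.range (fun x => x - compSeq m (fun j => T (j - ⟨1, by omega⟩)) x)))
    (hwmin : ∀ z ∈ closure
        (Set.range (fun x => x - compSeq m (fun j => T (j - ⟨1, by omega⟩)) x)), ‖w‖ ≤ ‖z‖) :
    u ∈ Set.range (fun x => x - compSeq m T x) ↔
      w ∈ Set.range (fun x => x - compSeq m (fun j => T (j - ⟨1, by omega⟩)) x) := by
  obtain ⟨k, rfl⟩ : ∃ k, m = k + 1 := ⟨m - 1, by omega⟩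
  rw [compSeq_succ] at hu humin ⊢
  rw [compSeq_sub_one] at hw hwmin ⊢
  have hT' i := IsRigidlyNonexpansive.of_firmlyNonexpansive (hT i)
  have hA := isRigidlyNonexpansive_compSeq fun i : Fin k => hT' i.castSucc
  have hB := hT' (Fin.last k)
  exact ⟨mem_range_sub_comp_of_mem_range_sub_comp hA hB.lipschitzWith humin hw hwmin,
    mem_range_sub_comp_of_mem_range_sub_comp hB hA.lipschitzWith hwmin hu humin⟩
end
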